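/- Let Γ be a countably infinite groupic with a finite symmetric generating set S and Cayley graph 𝒢, and let P be any bond percolation on 𝒢 (not necessarily Γ-invariant). Then the kernel k : Γ × Γ → [0,1], k(g,h) := P[g is not connected to h in ω] = 1 − τ(g,h), is a measure definite kernel: there exist a measure space (Ω, ℬ, μ) and a map g ↦ S_g from Γ to ℬ such that k(g,h) = μ(S_g Δ S_h) for all g,h ∈ Γ. -/

import Mathlib

open MeasureTheory Filter
open scoped ComplexOrder symmDiff

namespace InvPerc

variable {Γ : Type*} [Group Γ]

/-- Percolation configurations: indicator functions on unordered pairs of vertices. -/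
abbrev Config (Γ : Type*) := Sym2 Γ → Bool

/-- The edge set of the (right) Cayley graph of `Γ` with respect to `S`. -/
def IsCayleyEdge (S : Finset Γ) (e : Sym2 Γ) : Prop :=
  ∃ g : Γ, ∃ t ∈ S, e = s(g, g * t)

/-- The action of `Γ` on configurations induced by left multiplication:
`e ∈ shift γ ω ↔ γ⁻¹ • e ∈ ω`. -/
def shift (γ : Γ) (ω : Config Γ) : Config Γ :=
  fun e => ω (Sym2.map (fun x => γ⁻¹ * x) e)

/-- `ConnBy ω u v n` : `u` and `v` are joined by a path of at most `n` open edges of `ω`. -/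
def ConnBy (ω : Config Γ) (u v : Γ) (n : ℕ) : Prop :=
  ∃ l : List Γ, l.length ≤ n ∧ List.Chain (fun a b => ω s(a, b) = true) u l ∧
    (u :: l).getLast (List.cons_ne_nil u l) = v

/-- `u` and `v` lie in the same cluster of the configuration `ω` (`u ↔ v` in `ω`). -/
def Conn (ω : Config Γ) (u v : Γ) : Prop := ∃ n : ℕ, ConnBy ω u v n

/-- The two-point function `τ(u,v) = P[u ↔ v]`. -/
noncomputable def tpf (P : Measure (Config Γ)) (u v : Γ) : ℝ :=
  (P {ω | Conn ω u v}).toReal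

/-- A `Γ`-invariant bond percolation on the Cayley graph of `(Γ, S)`: a probability
measure on configurations, supported on subsets of the Cayley edge set, invariant under
the action induced by left multiplication. -/
structure IsInvBondPerc (S : Finset Γ) (P : Measure (Config Γ)) : Prop where
  prob : IsProbabilityMeasure P
  supported : P {ω | ∀ e : Sym2 Γ, ω e = true → IsCayleyEdge S e} = 1
  invariant : ∀ γ : Γ, P.map (shift γ) = P

/-- The expected degree of the origin, `E[deg_ω(o)] = ∑_{t ∈ S} P[{o, t} ∈ ω]`. -/
noncomputable def expDeg (S : Finset Γ) (P : Measure (Config Γ)) : ℝ :=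
  ∑ t ∈ S, (P {ω : Config Γ | ω s(1, t) = true}).toReal

/-- The word length of `g` with respect to the generating set `S`. -/
noncomputable def wlen (S : Finset Γ) (g : Γ) : ℕ :=
  sInf {n : ℕ | ∃ l : List Γ, (∀ x ∈ l, x ∈ S) ∧ l.prod = g ∧ l.length = n}

/-- The word metric `d(g,h) = |g⁻¹h|`. -/
noncomputable def wdist (S : Finset Γ) (g h : Γ) : ℕ := wlen S (g⁻¹ * h)

/-- The two-point function of `P` vanishes at infinity:
`sup {τ(g,h) : d(g,h) > r} → 0` as `r → ∞`. -/
def TpfVanishes (S : Finset Γ) (P : Measure (Config Γ)) : Prop :=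
  ∀ ε : ℝ, 0 < ε → ∃ r : ℕ, ∀ g h : Γ, r < wdist S g h → tpf P g h < ε

/-- `S` is a finite symmetric generating set not containing the identity. -/
def IsSymmGen (S : Finset Γ) : Prop :=
  (1 : Γ) ∉ S ∧ (∀ t ∈ S, t⁻¹ ∈ S) ∧
    ∀ g : Γ, ∃ l : List Γ, (∀ x ∈ l, x ∈ S) ∧ l.prod = g

/-- A positive definite function on `Γ`. -/
def IsPosDef (φ : Γ → ℂ) : Prop :=
  ∀ (n : ℕ) (g : Fin n → Γ) (a : Fin n → ℂ),
    0 ≤ ∑ i : Fin n, ∑ j : Fin n, (starRingEnd ℂ) (a i) * a j * φ ((g i)⁻¹ * g j)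

/-- A conditionally negative definite function on `Γ`. -/
def IsCondNegDef (ψ : Γ → ℝ) : Prop :=
  ψ 1 = 0 ∧ (∀ g : Γ, ψ g⁻¹ = ψ g) ∧
    ∀ (n : ℕ) (g : Fin n → Γ) (a : Fin n → ℝ), (∑ i : Fin n, a i) = 0 →
      ∑ i : Fin n, ∑ j : Fin n, a i * a j * ψ ((g i)⁻¹ * g j) ≤ 0

end InvPerc

/-!
Enumerate `Γ` injectively by `ι : Γ → ℕ` and label each cluster of `ω` by the least index of
its vertices. In `Config Γ × ℕ`, with `P` times half the counting measure, let `S_g` be the graph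
of `ω ↦ label of the cluster of g`. The section of `S_g ∆ S_h` over `ω` is empty if `g ↔ h` and
consists of two points of mass `1/2` otherwise, so `μ (S_g ∆ S_h) = P[g ↮ h]`.
-/

namespace InvPerc

open scoped ENNReal

section Labels

variable {Ω V : Type*} [MeasurableSpace Ω]

def labelGraph (f : Ω → V → ℕ) (v : V) : Set (Ω × ℕ) := {p | f p.1 v = p.2}

lemma measurableSet_labelGraph {f : Ω → V → ℕ} (hf : ∀ v, Measurable fun ω => f ω v) (v : V) :
    MeasurableSet (labelGraph f v) :=
  measurableSet_eq_fun ((hf v).comp measurable_fst) measurable_snd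

lemma halfCount_symmDiff_singleton {β : Type*} [DecidableEq β] [MeasurableSpace β]
    [MeasurableSingletonClass β] (a b : β) :
    ((2 : ℝ≥0∞)⁻¹ • Measure.count) ({a} ∆ {b} : Set β) = if a = b then 0 else 1 := by
  split_ifs with hab
  · simp [hab]
  · rw [measure_symmDiff_eq (measurableSet_singleton a).nullMeasurableSet
      (measurableSet_singleton b).nullMeasurableSet,
      Set.sdiff_singleton_eq_self (Set.notMem_singleton_iff.2 (Ne.symm hab)),
      Set.sdiff_singleton_eq_self (Set.notMem_singleton_iff.2 hab)]
    simpa [← two_mul] using ENNReal.mul_inv_cancel two_ne_zero ENNReal.ofNat_ne_top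

lemma prod_halfCount_labelGraph_symmDiff (μ : Measure Ω) {f : Ω → V → ℕ}
    (hf : ∀ v, Measurable fun ω => f ω v) (u v : V) :
    μ.prod ((2 : ℝ≥0∞)⁻¹ • Measure.count) (labelGraph f u ∆ labelGraph f v) =
      μ {ω | f ω u ≠ f ω v} := by
  rw [Measure.prod_apply ((measurableSet_labelGraph hf u).symmDiff (measurableSet_labelGraph hf v))]
  have hsection : ∀ ω, Prod.mk ω ⁻¹' (labelGraph f u ∆ labelGraph f v) = {f ω u} ∆ {f ω v} := by
    intro ω; ext n; simp [labelGraph, Set.mem_symmDiff, eq_comm]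
  simp_rw [hsection, halfCount_symmDiff_singleton]
  have hne : MeasurableSet {ω | f ω u ≠ f ω v} := (measurableSet_eq_fun (hf u) (hf v)).compl
  rw [← lintegral_indicator_one hne]
  congr! with ω
  simp [Set.indicator_apply, ite_not]

end Labels

section MinLabel

variable {V : Type*} (ι : V → ℕ)

open Classical

noncomputable def minLabel (s : Setoid V) (v : V) : ℕ :=
  Nat.find (⟨ι v, v, rfl, s.refl v⟩ : ∃ n, ∃ w, ι w = n ∧ s v w)

lemma exists_minLabel_eq (s : Setoid V) (v : V) : ∃ w, ι w = minLabel ι s v ∧ s v w :=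
  Nat.find_spec (⟨ι v, v, rfl, s.refl v⟩ : ∃ n, ∃ w, ι w = n ∧ s v w)

lemma minLabel_le {s : Setoid V} {v w : V} (h : s v w) : minLabel ι s v ≤ ι w :=
  Nat.find_min' _ ⟨w, rfl, h⟩

variable {ι}

lemma minLabel_eq_minLabel_iff (hι : Function.Injective ι) (s : Setoid V) (u v : V) :
    minLabel ι s u = minLabel ι s v ↔ s u v := by
  obtain ⟨w, hw, huw⟩ := exists_minLabel_eq ι s u
  obtain ⟨w', hw', hvw'⟩ := exists_minLabel_eq ι s v
  constructor
  · intro h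
    obtain rfl : w = w' := hι (by rw [hw, hw', h])
    exact s.trans huw (s.symm hvw')
  · intro huv
    exact le_antisymm (hw' ▸ minLabel_le ι (s.trans huv hvw'))
      (hw ▸ minLabel_le ι (s.trans (s.symm huv) huw))

lemma measurable_minLabel [Countable V] {Ω : Type*} [MeasurableSpace Ω] {s : Ω → Setoid V}
    (hs : ∀ u v, MeasurableSet {ω | s ω u v}) (v : V) :
    Measurable fun ω => minLabel ι (s ω) v := by
  refine measurable_find _ fun n => ?_
  simp only [Set.ofPred_exists, Set.ofPred_and]
  exact MeasurableSet.iUnion fun w => (MeasurableSet.const _).inter (hs v w)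

end MinLabel

section Clusters

variable {Γ : Type*}

lemma conn_eq_reflTransGen (ω : Config Γ) :
    Conn ω = Relation.ReflTransGen fun a b => ω s(a, b) = true := by
  ext u v
  constructor
  · rintro ⟨-, l, -, hl, hlast⟩
    exact List.relationReflTransGen_of_exists_isChain_cons l hl hlast
  · intro h
    obtain ⟨l, hl, hlast⟩ := List.exists_isChain_cons_of_relationReflTransGen h
    exact ⟨l.length, l, le_rfl, hl, hlast⟩

def clusterSetoid (ω : Config Γ) : Setoid Γ where
  r := Conn ω
  iseqv := by
    have : Std.Symm fun a b : Γ => ω s(a, b) = true := ⟨fun a b h => by rwa [Sym2.eq_swap]⟩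
    rw [conn_eq_reflTransGen]
    exact ⟨fun _ => .refl, symm_of _, .trans⟩

lemma measurableSet_isChain : ∀ l : List Γ,
    MeasurableSet {ω : Config Γ | l.IsChain fun a b => ω s(a, b) = true}
  | [] | [_] => by simp
  | a :: b :: l => by
    simp only [List.isChain_cons_cons, Set.ofPred_and]
    exact (measurable_pi_apply s(a, b) (measurableSet_singleton true)).inter
      (measurableSet_isChain (b :: l))

lemma measurableSet_conn [Countable Γ] (u v : Γ) : MeasurableSet {ω : Config Γ | Conn ω u v} := by
  simp only [Conn, ConnBy, Set.ofPred_exists, Set.ofPred_and]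
  exact .iUnion fun _ => .iUnion fun l =>
    (MeasurableSet.const _).inter ((measurableSet_isChain (u :: l)).inter (MeasurableSet.const _))

end Clusters

theorem nonconnection_kernel_measure_definite_general {Γ : Type} [Countable Γ]
    (P : Measure (Config Γ)) :
    ∃ (Ω : Type) (mΩ : MeasurableSpace Ω) (μ : Measure Ω) (Smap : Γ → Set Ω),
      (∀ g : Γ, MeasurableSet (Smap g)) ∧
      (∀ g h : Γ, μ (Smap g ∆ Smap h) = P {ω : Config Γ | ¬ Conn ω g h}) := by
  obtain ⟨ι, hι⟩ := Countable.exists_injective_nat Γ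
  let label : Config Γ → Γ → ℕ := fun ω => minLabel ι (clusterSetoid ω)
  have hlabel : ∀ g, Measurable fun ω => label ω g := measurable_minLabel measurableSet_conn
  refine ⟨Config Γ × ℕ, inferInstance, P.prod ((2 : ℝ≥0∞)⁻¹ • Measure.count), labelGraph label,
    measurableSet_labelGraph hlabel, fun g h => ?_⟩
  rw [prod_halfCount_labelGraph_symmDiff P hlabel]
  simp only [label, ne_eq, minLabel_eq_minLabel_iff hι]
  rfl

/-- for any bond percolation `P` on the Cayley graph of `(Γ, S)` (not
necessarily invariant), the kernel `k(g,h) = P[g ↮ h] = 1 - τ(g,h)` is measure definite. -/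
theorem nonconnection_kernel_measure_definite {Γ : Type} [Group Γ] [Countable Γ] [Infinite Γ]
    (S : Finset Γ) (hS : IsSymmGen S)
    (P : Measure (Config Γ)) (hprob : IsProbabilityMeasure P)
    (hsupp : P {ω : Config Γ | ∀ e : Sym2 Γ, ω e = true → IsCayleyEdge S e} = 1) :
    ∃ (Ω : Type) (mΩ : MeasurableSpace Ω) (μ : Measure Ω) (Smap : Γ → Set Ω),
      (∀ g : Γ, MeasurableSet (Smap g)) ∧
      (∀ g h : Γ, μ (Smap g ∆ Smap h) = P {ω : Config Γ | ¬ Conn ω g h}) :=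
  nonconnection_kernel_measure_definite_general P

end InvPerc
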